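/- Suppose T_k is nonempty. Then T_{k+1} consists exactly of the indices i ∈ L_{k+1} satisfying both min(T_k) < i and f(i) > f(max(T_k)). -/

import Mathlib

/-!
Write `j ≪ i` (`Precedes f j i`) for `j < i ∧ f j < f i`. Each level set, before or after
inserting `x`, is an antichain for `≪`, so listed by index its values decrease; in particular
this holds for `T_k`, all of whose elements have new level `k + 1`. An element `i ≠ x` lies in
`T_{k+1}` exactly when `i ∈ L_{k+1}` and some `t ∈ T_k` has `t ≪ i`: its predecessor on a longest
new chain. Given `i ∈ L_{k+1}` with `min T_k < i` and `f (max T_k) < f i`, such a `t` is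
`max T_k` when `max T_k < i`. Otherwise take the predecessor `p ∈ L_k` of `i`: if
`p ≤ min T_k`, then `min T_k` works by the antichain property; if not, `p` lies between two
elements of `T_k`, and one level down the statement itself shows that `T_k ∩ L_k` is an interval
of `L_k`, so `p ∈ T_k`. This is an induction on `k`.
-/

/-- `c` is an increasing subsequence of `(S, f)`: a list of indices, all in `S`,
strictly increasing in index and strictly increasing in value. -/
def IsIncrSubseq (S : Finset ℕ) (f : ℕ → ℝ) (c : List ℕ) : Prop :=
  (∀ a ∈ c, a ∈ S) ∧ c.Chain' (· < ·) ∧ c.Chain' (fun a b => f a < f b)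

/-- `lvl S f i` is the maximum length of an increasing subsequence of `(S, f)` ending at `i`. -/
noncomputable def lvl (S : Finset ℕ) (f : ℕ → ℝ) (i : ℕ) : ℕ :=
  sSup {m | ∃ c : List ℕ, IsIncrSubseq S f c ∧ c.getLast? = some i ∧ c.length = m}

/-- The level set `L_k = {i ∈ S : lvl S f i = k}`. -/
def levelSet (S : Finset ℕ) (f : ℕ → ℝ) (k : ℕ) : Set ℕ :=
  {i | i ∈ S ∧ lvl S f i = k}

/-- The promoted set `T_k`: indices of `S' = S ∪ {x}` whose post-insertion level is `k + 1`
and which are either the inserted index `x` or had pre-insertion level `k`. -/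
def promoted (S : Finset ℕ) (f : ℕ → ℝ) (x : ℕ) (k : ℕ) : Set ℕ :=
  {i | i ∈ insert x S ∧ lvl (insert x S) f i = k + 1 ∧ (i = x ∨ lvl S f i = k)}

def Precedes (f : ℕ → ℝ) (i j : ℕ) : Prop := i < j ∧ f i < f j

theorem Precedes.trans {f : ℕ → ℝ} {i j k : ℕ} (hij : Precedes f i j) (hjk : Precedes f j k) :
    Precedes f i k :=
  ⟨hij.1.trans hjk.1, hij.2.trans hjk.2⟩

section IncreasingSubsequences

variable {S : Finset ℕ} {f : ℕ → ℝ} {c d : List ℕ} {i j : ℕ}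

theorem isIncrSubseq_iff_pairwise :
    IsIncrSubseq S f c ↔ (∀ a ∈ c, a ∈ S) ∧ c.Pairwise (Precedes f) := by
  have : Trans (fun a b => f a < f b) (fun a b => f a < f b) (fun a b => f a < f b) :=
    ⟨lt_trans⟩
  change (_ ∧ c.IsChain _ ∧ c.IsChain _) ↔ _ ∧ c.Pairwise fun a b => a < b ∧ f a < f b
  rw [List.pairwise_and_iff, List.isChain_iff_pairwise, List.isChain_iff_pairwise]

theorem IsIncrSubseq.sublist (hc : IsIncrSubseq S f c) (hdc : d.Sublist c) :
    IsIncrSubseq S f d := by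
  rw [isIncrSubseq_iff_pairwise] at hc ⊢
  exact ⟨fun a ha => hc.1 a (hdc.subset ha), hc.2.sublist hdc⟩

theorem IsIncrSubseq.nodup (hc : IsIncrSubseq S f c) : c.Nodup :=
  (isIncrSubseq_iff_pairwise.1 hc).2.imp fun h => h.1.ne

theorem IsIncrSubseq.length_le_card (hc : IsIncrSubseq S f c) : c.length ≤ S.card := by
  rw [← List.toFinset_card_of_nodup hc.nodup]
  exact Finset.card_le_card fun a ha => hc.1 a (List.mem_toFinset.1 ha)

theorem IsIncrSubseq.append_singleton (hc : IsIncrSubseq S f (c ++ [j])) (hi : i ∈ S)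
    (hji : Precedes f j i) : IsIncrSubseq S f (c ++ [j] ++ [i]) := by
  rw [isIncrSubseq_iff_pairwise] at hc ⊢
  obtain ⟨hmem, hc⟩ := hc
  refine ⟨fun a ha => ?_, ?_⟩
  · rcases List.mem_append.1 ha with ha | ha
    · exact hmem a ha
    · rwa [List.mem_singleton.1 ha]
  refine List.pairwise_append.2 ⟨hc, List.pairwise_singleton _ _, fun a ha b hb => ?_⟩
  obtain rfl := List.mem_singleton.1 hb
  rcases List.mem_append.1 ha with ha | ha
  · exact (List.pairwise_append.1 hc).2.2 a ha j (List.mem_singleton_self j) |>.trans hji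
  · rwa [List.mem_singleton.1 ha]

theorem bddAbove_lengths_of_isIncrSubseq (S : Finset ℕ) (f : ℕ → ℝ) (i : ℕ) :
    BddAbove {m | ∃ c : List ℕ, IsIncrSubseq S f c ∧ c.getLast? = some i ∧ c.length = m} :=
  ⟨S.card, by rintro _ ⟨c, hc, -, rfl⟩; exact hc.length_le_card⟩

theorem isIncrSubseq_singleton (hi : i ∈ S) : IsIncrSubseq S f [i] :=
  isIncrSubseq_iff_pairwise.2 ⟨by simpa using hi, List.pairwise_singleton _ _⟩

theorem le_lvl (hc : IsIncrSubseq S f (c ++ [i])) : c.length + 1 ≤ lvl S f i :=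
  le_csSup (bddAbove_lengths_of_isIncrSubseq S f i) ⟨_, hc, List.getLast?_concat, by simp⟩

theorem lvl_le {B : ℕ} (h : ∀ c, IsIncrSubseq S f (c ++ [i]) → c.length + 1 ≤ B) :
    lvl S f i ≤ B := by
  refine csSup_le' ?_
  rintro _ ⟨c, hc, hlast, rfl⟩
  obtain ⟨c, rfl⟩ := List.getLast?_eq_some_iff.1 hlast
  simpa using h c hc

theorem exists_isIncrSubseq_length_eq_lvl (hi : i ∈ S) :
    ∃ c, IsIncrSubseq S f (c ++ [i]) ∧ c.length + 1 = lvl S f i := by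
  obtain ⟨c, hc, hlast, hlen⟩ := Nat.sSup_mem (s := {m | ∃ c : List ℕ, IsIncrSubseq S f c ∧
    c.getLast? = some i ∧ c.length = m}) ⟨1, [i], isIncrSubseq_singleton hi, rfl, rfl⟩
    (bddAbove_lengths_of_isIncrSubseq S f i)
  obtain ⟨c, rfl⟩ := List.getLast?_eq_some_iff.1 hlast
  exact ⟨c, hc, by rw [lvl, ← hlen]; simp⟩

theorem lvl_eq_zero (hi : i ∉ S) : lvl S f i = 0 :=
  Nat.le_zero.1 <| lvl_le fun c hc => absurd (hc.1 i (by simp)) hi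

theorem one_le_lvl (hi : i ∈ S) : 1 ≤ lvl S f i :=
  le_lvl (c := []) (isIncrSubseq_singleton hi)

theorem mem_of_lvl_pos (h : 0 < lvl S f i) : i ∈ S := by
  by_contra hi
  rw [lvl_eq_zero hi] at h
  exact h.false

theorem lvl_lt_lvl (hi : i ∈ S) (hji : Precedes f j i) : lvl S f j < lvl S f i := by
  by_cases hj : j ∈ S
  · obtain ⟨c, hc, hlen⟩ := exists_isIncrSubseq_length_eq_lvl hj
    have := le_lvl (hc.append_singleton hi hji)
    simp only [List.length_append, List.length_singleton] at this
    omega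
  · rw [lvl_eq_zero hj]
    exact one_le_lvl hi

theorem antitoneOn_levelSet (m : ℕ) : AntitoneOn f (levelSet S f m) := by
  intro p hp q hq hpq
  rcases hpq.eq_or_lt with rfl | hpq
  · exact le_rfl
  · by_contra hf
    exact (lvl_lt_lvl hq.1 ⟨hpq, not_le.1 hf⟩).ne (hp.2.trans hq.2.symm)

theorem exists_precedes_lvl_eq {m : ℕ} (h : lvl S f i = m + 2) :
    ∃ j ∈ S, Precedes f j i ∧ lvl S f j = m + 1 := by
  have hi : i ∈ S := mem_of_lvl_pos (f := f) (by omega)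
  obtain ⟨c, hc, hlen⟩ := exists_isIncrSubseq_length_eq_lvl (f := f) hi
  obtain ⟨d, j, rfl⟩ := c.eq_nil_or_concat.resolve_left (by rintro rfl; simp at hlen; omega)
  rw [List.concat_eq_append] at hc hlen
  have hji : Precedes f j i :=
    List.pairwise_append.1 (isIncrSubseq_iff_pairwise.1 hc).2 |>.2.2 j (by simp) i (by simp)
  have hj := le_lvl (hc.sublist (List.sublist_append_left _ _))
  have := lvl_lt_lvl hi hji
  simp only [List.length_append, List.length_singleton] at hlen
  exact ⟨j, hc.1 j (by simp), hji, by omega⟩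

theorem lvl_insert_le {x : ℕ} (hix : i ≠ x) : lvl (insert x S) f i ≤ lvl S f i + 1 := by
  refine lvl_le fun c hc => ?_
  have hnodup : c.Nodup := (hc.sublist (List.sublist_append_left c [i])).nodup
  have herase : IsIncrSubseq S f (c.erase x ++ [i]) := by
    refine ⟨fun a ha => ?_, (hc.sublist (List.erase_sublist.append_right [i])).2⟩
    have hax : a ≠ x := by
      rcases List.mem_append.1 ha with ha | ha
      · exact ((hnodup.mem_erase_iff).1 ha).1
      · rwa [List.mem_singleton.1 ha]
    exact (Finset.mem_insert.1 <| hc.1 a <|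
      (List.erase_sublist.append_right [i]).subset ha).resolve_left hax
  have := le_lvl herase
  rw [List.length_erase] at this
  split_ifs at this <;> omega

end IncreasingSubsequences

section Promotion

variable {S : Finset ℕ} {f : ℕ → ℝ} {x k i p q t w : ℕ}

theorem mem_promoted_of_ne (hw : w ∈ promoted S f x k) (hwx : w ≠ x) :
    w ∈ S ∧ lvl S f w = k ∧ lvl (insert x S) f w = k + 1 :=
  ⟨(Finset.mem_insert.1 hw.1).resolve_left hwx, hw.2.2.resolve_left hwx, hw.2.1⟩

theorem promoted_subset_levelSet : promoted S f x k ⊆ levelSet (insert x S) f (k + 1) :=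
  fun _ hw => ⟨hw.1, hw.2.1⟩

theorem exists_promoted_precedes (hw : w ∈ promoted S f x (k + 1)) (hwx : w ≠ x) :
    ∃ t ∈ promoted S f x k, Precedes f t w := by
  obtain ⟨hwS, hlw, hl'w⟩ := mem_promoted_of_ne hw hwx
  obtain ⟨t, htS', htw, hl't⟩ := exists_precedes_lvl_eq hl'w
  refine ⟨t, ⟨htS', hl't, ?_⟩, htw⟩
  by_cases htx : t = x
  · exact Or.inl htx
  · have := lvl_lt_lvl hwS htw
    have := lvl_insert_le (S := S) (f := f) htx
    exact Or.inr (by omega)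

theorem mem_promoted_succ_of_precedes (hx : x ∉ S) (ht : t ∈ promoted S f x k)
    (htw : Precedes f t w) (hw : lvl S f w = k + 1) : w ∈ promoted S f x (k + 1) := by
  have hwS : w ∈ S := mem_of_lvl_pos (f := f) (by omega)
  have hwx : w ≠ x := fun h => hx (h ▸ hwS)
  have := lvl_lt_lvl (S := insert x S) (Finset.mem_insert_of_mem hwS) htw
  have := lvl_insert_le (S := S) (f := f) hwx
  have := ht.2.1
  exact ⟨Finset.mem_insert_of_mem hwS, by omega, Or.inr hw⟩

theorem lvl_insert_self_le (hw : w ∈ promoted S f x k) (hwx : w ≠ x) :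
    lvl (insert x S) f x ≤ k := by
  induction k generalizing w with
  | zero =>
    obtain ⟨hwS, hlw, -⟩ := mem_promoted_of_ne hw hwx
    have := one_le_lvl (f := f) hwS
    omega
  | succ k ih =>
    obtain ⟨t, ht, -⟩ := exists_promoted_precedes hw hwx
    by_cases htx : t = x
    · exact (htx ▸ ht.2.1).le
    · exact (ih ht htx).trans k.le_succ

theorem ne_of_mem_promoted (hp : p ∈ promoted S f x k) (hq : q ∈ promoted S f x k)
    (hpq : p ≠ q) : p ≠ x := by
  rintro rfl
  have := lvl_insert_self_le hq hpq.symm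
  have := hp.2.1
  omega

theorem ne_of_mem_promoted_succ (hp : p ∈ promoted S f x k) (hi : i ∈ promoted S f x (k + 1)) :
    i ≠ x := by
  rintro rfl
  have hpx : p ≠ i := by
    rintro rfl
    have := hi.2.1
    have := hp.2.1
    omega
  have := lvl_insert_self_le hp hpx
  have := hi.2.1
  omega

/-- Given `mem_promoted_succ` below `k`, `T_k` meets `L_k` in an interval for the index order. -/
theorem mem_promoted_of_lt_of_lt
    (ih : ∀ m < k, ∀ a ∈ promoted S f x m, ∀ b ∈ promoted S f x m, ∀ i ∈ levelSet S f (m + 1),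
      a < i → f b < f i → i ∈ promoted S f x (m + 1))
    (hp : p ∈ promoted S f x k) (hq : q ∈ promoted S f x k) (hi : i ∈ levelSet S f k)
    (hpi : p < i) (hiq : i < q) : i ∈ promoted S f x k := by
  have hpx := ne_of_mem_promoted hp hq (by omega)
  have hqx := ne_of_mem_promoted hq hp (by omega)
  obtain ⟨hpS, hlp, -⟩ := mem_promoted_of_ne hp hpx
  obtain ⟨hqS, hlq, -⟩ := mem_promoted_of_ne hq hqx
  obtain ⟨m, rfl⟩ : ∃ m, k = m + 1 := Nat.exists_eq_add_one.2 (hlp ▸ one_le_lvl hpS)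
  obtain ⟨u, hu, hup⟩ := exists_promoted_precedes hp hpx
  obtain ⟨v, hv, hvq⟩ := exists_promoted_precedes hq hqx
  have hfqi : f q ≤ f i := antitoneOn_levelSet _ hi ⟨hqS, hlq⟩ hiq.le
  exact ih m m.lt_succ_self u hu v hv i hi (hup.1.trans hpi) (hvq.2.trans_le hfqi)

theorem mem_promoted_succ_of_convex (hx : x ∉ S)
    (hconv : ∀ p ∈ promoted S f x k, ∀ q ∈ promoted S f x k, ∀ j ∈ levelSet S f k,
      p < j → j < q → j ∈ promoted S f x k)
    {a b : ℕ} (ha : a ∈ promoted S f x k) (hb : b ∈ promoted S f x k)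
    (hi : i ∈ levelSet S f (k + 1)) (hai : a < i) (hbi : f b < f i) :
    i ∈ promoted S f x (k + 1) := by
  obtain ⟨hiS, hli⟩ := hi
  suffices ∃ t ∈ promoted S f x k, Precedes f t i by
    obtain ⟨t, ht, hti⟩ := this
    exact mem_promoted_succ_of_precedes hx ht hti hli
  rcases lt_trichotomy b i with hbi' | rfl | hib
  · exact ⟨b, hb, hbi', hbi⟩
  · rcases hb.2.2 with rfl | hlb
    · exact absurd hiS hx
    · omega
  obtain ⟨haS, hla, -⟩ := mem_promoted_of_ne ha (ne_of_mem_promoted ha hb (by omega))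
  obtain ⟨m, rfl⟩ : ∃ m, k = m + 1 := Nat.exists_eq_add_one.2 (hla ▸ one_le_lvl haS)
  obtain ⟨p, hpS, hpi, hlp⟩ := exists_precedes_lvl_eq hli
  rcases le_or_gt p a with hpa | hap
  · exact ⟨a, ha, hai, (antitoneOn_levelSet _ ⟨hpS, hlp⟩ ⟨haS, hla⟩ hpa).trans_lt hpi.2⟩
  · exact ⟨p, hconv a ha b hb p ⟨hpS, hlp⟩ hap (hpi.1.trans hib), hpi⟩

theorem mem_promoted_succ (hx : x ∉ S) (k : ℕ) :
    ∀ a ∈ promoted S f x k, ∀ b ∈ promoted S f x k, ∀ i ∈ levelSet S f (k + 1),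
      a < i → f b < f i → i ∈ promoted S f x (k + 1) := by
  induction k using Nat.strong_induction_on with
  | _ k ih =>
    exact fun a ha b hb i hi => mem_promoted_succ_of_convex hx
      (fun p hp q hq j hj => mem_promoted_of_lt_of_lt ih hp hq hj) ha hb hi

end Promotion

/-- If `T_k` is nonempty, then `T_{k+1}` consists exactly of the indices `i ∈ L_{k+1}`
with `min (T_k) < i` and `f i > f (max (T_k))`. -/
theorem stmt_7 (S : Finset ℕ) (f : ℕ → ℝ) (x : ℕ) (hx : x ∉ S) (k : ℕ)
    (hT : (promoted S f x k).Nonempty) :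
    promoted S f x (k + 1) =
      {i | i ∈ levelSet S f (k + 1) ∧ sInf (promoted S f x k) < i ∧
        f (sSup (promoted S f x k)) < f i} := by
  have hbdd : BddAbove (promoted S f x k) :=
    ((insert x S).finite_toSet.subset fun _ hp => hp.1).bddAbove
  have hmin := Nat.sInf_mem hT
  have hmax := Nat.sSup_mem hT hbdd
  ext i
  refine ⟨fun hi => ?_, fun ⟨hi, hmin_lt, hmax_lt⟩ =>
    mem_promoted_succ hx k _ hmin _ hmax i hi hmin_lt hmax_lt⟩
  have hix := ne_of_mem_promoted_succ hmin hi
  obtain ⟨hiS, hli, -⟩ := mem_promoted_of_ne hi hix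
  obtain ⟨t, ht, hti⟩ := exists_promoted_precedes hi hix
  exact ⟨⟨hiS, hli⟩, (Nat.sInf_le ht).trans_lt hti.1,
    ((antitoneOn_levelSet _).mono promoted_subset_levelSet ht hmax
      (le_csSup hbdd ht)).trans_lt hti.2⟩
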